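/- For a positive definite matrix X and t ≠ 0, the map f_t(A) = X #_t A on positive definite matrices is a bijection with inverse f_{1/t}; that is, X #_t Z = A if and only if Z = X #_{1/t} A. -/

import Mathlib

open MeasureTheory
open scoped ComplexOrder

abbrev Mat (m : ℕ) := Matrix (Fin m) (Fin m) ℂ

noncomputable instance {m : ℕ} : MeasurableSpace (Mat m) := borel _
instance {m : ℕ} : BorelSpace (Mat m) := ⟨rfl⟩

/-- Functional calculus on Hermitian matrices (junk value `A` otherwise). -/
noncomputable def matFun {m : ℕ} (f : ℝ → ℝ) (A : Mat m) : Mat m :=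
  if h : A.IsHermitian then
    (h.eigenvectorUnitary : Mat m) *
      Matrix.diagonal (fun i => (f (h.eigenvalues i) : ℂ)) *
      star (h.eigenvectorUnitary : Mat m)
  else A

/-- Real power `A^t` of a positive definite matrix, via the spectral decomposition. -/
noncomputable def mpow {m : ℕ} (A : Mat m) (t : ℝ) : Mat m := matFun (fun x => x ^ t) A

/-- Logarithm of a positive definite matrix, via the spectral decomposition. -/
noncomputable def mlog {m : ℕ} (A : Mat m) : Mat m := matFun Real.log A

/-- The operator norm of a matrix (acting on the Euclidean space). -/
noncomputable def opN {m : ℕ} (A : Mat m) : ℝ :=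
  ‖(Matrix.toEuclideanCLM (𝕜 := ℂ) A : EuclideanSpace ℂ (Fin m) →L[ℂ] EuclideanSpace ℂ (Fin m))‖

/-- The Frobenius (Hilbert-Schmidt) norm of a matrix. -/
noncomputable def fnorm {m : ℕ} (A : Mat m) : ℝ :=
  Real.sqrt (∑ i, ∑ j, ‖A i j‖ ^ 2)

/-- The Riemannian trace metric distance `d(A,B) = ‖log (A^{-1/2} B A^{-1/2})‖₂`. -/
noncomputable def rdist {m : ℕ} (A B : Mat m) : ℝ :=
  fnorm (mlog (mpow A (-(1/2 : ℝ)) * B * mpow A (-(1/2 : ℝ))))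

/-- The `t`-weighted geometric mean `X #_t A = X^{1/2} (X^{-1/2} A X^{-1/2})^t X^{1/2}`. -/
noncomputable def geom {m : ℕ} (X : Mat m) (t : ℝ) (A : Mat m) : Mat m :=
  mpow X (1/2 : ℝ) * mpow (mpow X (-(1/2 : ℝ)) * A * mpow X (-(1/2 : ℝ))) t * mpow X (1/2 : ℝ)

/-- Finite first moment for a measure on positive definite matrices. -/
def HasFFM {m : ℕ} (μ : Measure (Mat m)) : Prop :=
  ∃ Y : Mat m, Y.PosDef ∧ Integrable (fun A => rdist A Y) μ

/-- Couplings of two probability measures. -/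
def couplings {m : ℕ} (μ ν : Measure (Mat m)) : Set (Measure (Mat m × Mat m)) :=
  {π | IsProbabilityMeasure π ∧ π.map Prod.fst = μ ∧ π.map Prod.snd = ν}

/-- The 1-Wasserstein distance with respect to the Riemannian trace metric. -/
noncomputable def W1 {m : ℕ} (μ ν : Measure (Mat m)) : ℝ :=
  sInf ((fun π : Measure (Mat m × Mat m) => ∫ p, rdist p.1 p.2 ∂π) '' couplings μ ν)

/-! `X #_t ·` is the congruence by `X^{-1/2}`, followed by `B ↦ B^t`, followed by the
congruence by `X^{1/2}`. The two congruences are mutually inverse and `(B^t)^{1/t} = B` in the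
functional calculus, so `X #_{1/t} ·` is a two-sided inverse of `X #_t ·`; all three maps
preserve positive definiteness. -/

lemma Matrix.PosDef.pos_of_mem_spectrum_real {n 𝕜 : Type*} [Fintype n] [DecidableEq n] [RCLike 𝕜]
    {A : Matrix n n 𝕜} (hA : A.PosDef) {x : ℝ} (hx : x ∈ spectrum ℝ A) : 0 < x := by
  obtain ⟨i, rfl⟩ := hA.1.spectrum_real_eq_range_eigenvalues ▸ hx
  exact hA.eigenvalues_pos i

lemma Matrix.PosDef.mul_mul_same {n 𝕜 : Type*} [Fintype n] [DecidableEq n] [RCLike 𝕜]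
    {B C : Matrix n n 𝕜} (hB : B.PosDef) (hC : C.PosDef) : (C * B * C).PosDef := by
  have h := (Matrix.IsUnit.posDef_star_right_conjugate_iff hC.isUnit).2 hB
  rwa [Matrix.star_eq_conjTranspose, hC.1.eq] at h

lemma mul_mul_mul_mul_cancel_of_mul_eq_one {M : Type*} [Monoid M] {a b : M} (hab : a * b = 1)
    (hba : b * a = 1) (x : M) : a * (b * x * b) * a = x :=
  calc a * (b * x * b) * a = (a * b) * x * (b * a) := by simp only [mul_assoc]
    _ = x := by rw [hab, hba, one_mul, mul_one]

section mpow

variable {m : ℕ} {A : Mat m}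

lemma matFun_eq_cfc (f : ℝ → ℝ) (hA : A.IsHermitian) : matFun f A = cfc f A := by
  rw [matFun, dif_pos hA, hA.cfc_eq]
  rfl

lemma mpow_eq_cfc (hA : A.IsHermitian) (t : ℝ) : mpow A t = cfc (fun x : ℝ => x ^ t) A :=
  matFun_eq_cfc _ hA

lemma mpow_posDef (hA : A.PosDef) (t : ℝ) : (mpow A t).PosDef := by
  rw [mpow, matFun, dif_pos hA.1, Matrix.IsUnit.posDef_star_right_conjugate_iff Unitary.isUnit_coe,
    Matrix.posDef_diagonal_iff]
  exact fun i => mod_cast Real.rpow_pos_of_pos (hA.eigenvalues_pos i) t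

lemma mpow_zero (hA : A.IsHermitian) : mpow A 0 = 1 := by
  simp only [mpow_eq_cfc hA, Real.rpow_zero]
  exact cfc_const_one ℝ A

lemma mpow_one (hA : A.IsHermitian) : mpow A 1 = A := by
  simp only [mpow_eq_cfc hA, Real.rpow_one]
  exact cfc_id' ℝ A

-- The spectrum of a matrix is finite, so every function is continuous on it.
lemma mpow_mul_mpow (hA : A.PosDef) (s t : ℝ) : mpow A s * mpow A t = mpow A (s + t) := by
  simp only [mpow_eq_cfc hA.1]
  rw [← cfc_mul _ _ A (Matrix.finite_real_spectrum.continuousOn _)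
    (Matrix.finite_real_spectrum.continuousOn _)]
  exact cfc_congr fun x hx => (Real.rpow_add (hA.pos_of_mem_spectrum_real hx) s t).symm

lemma mpow_mul_mpow_neg (hA : A.PosDef) (s : ℝ) : mpow A s * mpow A (-s) = 1 := by
  rw [mpow_mul_mpow hA, add_neg_cancel, mpow_zero hA.1]

lemma mpow_mpow (hA : A.PosDef) (s t : ℝ) : mpow (mpow A s) t = mpow A (s * t) := by
  rw [mpow_eq_cfc (mpow_posDef hA s).1, mpow_eq_cfc hA.1, mpow_eq_cfc hA.1]
  refine (cfc_comp (fun x : ℝ => x ^ t) (fun x : ℝ => x ^ s) A hA.1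
    ((Matrix.finite_real_spectrum.image _).continuousOn _)
    (Matrix.finite_real_spectrum.continuousOn _)).symm.trans ?_
  exact cfc_congr fun x hx => (Real.rpow_mul (hA.pos_of_mem_spectrum_real hx).le s t).symm

end mpow

section geom

variable {m : ℕ} {X Z : Mat m}

lemma posDef_mpow_neg_half_conj (hX : X.PosDef) (hZ : Z.PosDef) :
    (mpow X (-(1/2 : ℝ)) * Z * mpow X (-(1/2 : ℝ))).PosDef :=
  hZ.mul_mul_same (mpow_posDef hX _)

lemma geom_posDef (hX : X.PosDef) (hZ : Z.PosDef) (t : ℝ) : (geom X t Z).PosDef :=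
  (mpow_posDef (posDef_mpow_neg_half_conj hX hZ) t).mul_mul_same (mpow_posDef hX _)

lemma geom_one_div_geom (hX : X.PosDef) {t : ℝ} (ht : t ≠ 0) (hZ : Z.PosDef) :
    geom X (1/t) (geom X t Z) = Z := by
  have hPN : mpow X (1/2 : ℝ) * mpow X (-(1/2 : ℝ)) = 1 := mpow_mul_mpow_neg hX _
  have hNP : mpow X (-(1/2 : ℝ)) * mpow X (1/2 : ℝ) = 1 := by
    simpa only [neg_neg] using mpow_mul_mpow_neg hX (-(1/2 : ℝ))
  have hB := posDef_mpow_neg_half_conj hX hZ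
  rw [geom, geom, mul_mul_mul_mul_cancel_of_mul_eq_one hNP hPN, mpow_mpow hB,
    mul_one_div_cancel ht, mpow_one hB.1, mul_mul_mul_mul_cancel_of_mul_eq_one hPN hNP]

end geom

/-- For `t ≠ 0`, `A ↦ X #_t A` is a bijection on positive definite matrices with
inverse `A ↦ X #_{1/t} A`: `X #_t Z = A ↔ Z = X #_{1/t} A`. -/
theorem stmt5 {m : ℕ} (X : Mat m) (hX : X.PosDef) (t : ℝ) (ht : t ≠ 0) :
    Set.BijOn (geom X t) {A : Mat m | A.PosDef} {A : Mat m | A.PosDef} ∧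
    ∀ Z A : Mat m, Z.PosDef → A.PosDef → (geom X t Z = A ↔ Z = geom X (1/t) A) := by
  have geom_geom_one_div {A : Mat m} (hA : A.PosDef) : geom X t (geom X (1/t) A) = A := by
    simpa only [one_div_one_div] using geom_one_div_geom hX (one_div_ne_zero ht) hA
  have mapsTo (s : ℝ) : Set.MapsTo (geom X s) {A | A.PosDef} {A | A.PosDef} :=
    fun _ hZ => geom_posDef hX hZ s
  refine ⟨Set.InvOn.bijOn ⟨fun Z hZ => geom_one_div_geom hX ht hZ, fun A hA => geom_geom_one_div hA⟩
    (mapsTo t) (mapsTo (1/t)), fun Z A hZ hA => ⟨?_, ?_⟩⟩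
  · rintro rfl
    exact (geom_one_div_geom hX ht hZ).symm
  · rintro rfl
    exact geom_geom_one_div hA
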